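/- arXiv:1801.00370 — 2 statements merged into one kernel-verified Lean document; each statement's English description precedes it below -/
import Mathlib

section
/- Let A be a vector space with an alternating bilinear bracket, σ ⊆ A a subspace with [σ,σ] ⊆ σ and Jacobiator of A valued in σ, and suppose the induced map ι : σ → End(A/σ), ι(T)([α]) = [[T,α]], is injective. Then the restriction of the bracket to σ satisfies the Jacobi identity, i.e. σ is a Lie algebra. -/
/-- For a standard Cartan pair over a point: if the conjugation map
`ι : σ → End(A/σ)`, `ι(T)([α]) = [[T,α]]`, is injective, then the bracket restricted
to `σ` satisfies the Jacobi identity, i.e. `σ` is a Lie algebra. -/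
theorem standard_cartan_pair_sigma_jacobi {K A : Type*} [Field K]
    [AddCommGroup A] [Module K A]
    (B : A →ₗ[K] A →ₗ[K] A) (halt : ∀ x, B x x = 0)
    (σ : Submodule K A)
    (hcl : ∀ x ∈ σ, ∀ y ∈ σ, B x y ∈ σ)
    (hjac : ∀ α β γ : A, B (B α β) γ + B (B β γ) α + B (B γ α) β ∈ σ)
    (ι : σ → ((A ⧸ σ) →ₗ[K] (A ⧸ σ)))
    (hι : ∀ (T : σ) (α : A),
      ι T (Submodule.Quotient.mk α) = Submodule.Quotient.mk (B T.1 α))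
    (hinj : Function.Injective ι) :
    ∀ x ∈ σ, ∀ y ∈ σ, ∀ z ∈ σ, B (B x y) z + B (B y z) x + B (B z x) y = 0 := by
  intro x hx y hy z hz
  -- antisymmetry of the bracket
  have hanti : ∀ a b : A, B a b = -B b a := by
    intro a b
    have h := halt (a + b)
    simp only [map_add, LinearMap.add_apply, halt, zero_add, add_zero] at h
    exact eq_neg_of_add_eq_zero_right h
  -- modulo σ, the bracket acts by commutators
  have key : ∀ s t α : A,
      (Submodule.Quotient.mk (B (B s t) α) : A ⧸ σ) =
        Submodule.Quotient.mk (B s (B t α)) - Submodule.Quotient.mk (B t (B s α)) := by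
    intro s t α
    rw [← Submodule.Quotient.mk_sub, Submodule.Quotient.eq]
    have e : B (B s t) α - (B s (B t α) - B t (B s α)) =
        B (B s t) α + B (B t α) s + B (B α s) t := by
      rw [hanti (B t α) s, hanti α s, map_neg, LinearMap.neg_apply, hanti (B s α) t]
      abel
    rw [e]
    exact hjac s t α
  -- bracketing with an element of σ descends to the quotient
  have keyc : ∀ c ∈ σ, ∀ w1 w2 : A,
      (Submodule.Quotient.mk w1 : A ⧸ σ) = Submodule.Quotient.mk w2 →
      (Submodule.Quotient.mk (B c w1) : A ⧸ σ) = Submodule.Quotient.mk (B c w2) := by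
    intro c hc w1 w2 h
    rw [Submodule.Quotient.eq] at h ⊢
    have := hcl c hc _ h
    simpa [map_sub] using this
  -- the Jacobiator lies in σ
  set J : A := B (B x y) z + B (B y z) x + B (B z x) y with hJ
  have hJσ : J ∈ σ := hjac x y z
  have hT : (⟨J, hJσ⟩ : σ) = 0 := by
    apply hinj
    have hι0 : ι (0 : σ) = 0 := by
      apply LinearMap.ext; intro m
      obtain ⟨α, rfl⟩ := Submodule.Quotient.mk_surjective σ m
      rw [hι]
      simp
    rw [hι0]
    apply LinearMap.ext; intro m
    obtain ⟨α, rfl⟩ := Submodule.Quotient.mk_surjective σ m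
    rw [hι]
    show (Submodule.Quotient.mk (B J α) : A ⧸ σ) = 0
    have expand : B J α = B (B (B x y) z) α + B (B (B y z) x) α + B (B (B z x) y) α := by
      rw [hJ]; simp [map_add]
    rw [expand, Submodule.Quotient.mk_add, Submodule.Quotient.mk_add]
    -- expand each term
    have t1 : (Submodule.Quotient.mk (B (B (B x y) z) α) : A ⧸ σ) =
        Submodule.Quotient.mk (B x (B y (B z α))) - Submodule.Quotient.mk (B y (B x (B z α)))
        - (Submodule.Quotient.mk (B z (B x (B y α))) - Submodule.Quotient.mk (B z (B y (B x α)))) := by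
      rw [key (B x y) z α, key x y (B z α)]
      congr 1
      have h2 : (Submodule.Quotient.mk (B z (B (B x y) α)) : A ⧸ σ) =
          Submodule.Quotient.mk (B z (B x (B y α) - B y (B x α))) := by
        apply keyc z hz
        rw [Submodule.Quotient.mk_sub]
        exact key x y α
      rw [h2, map_sub, Submodule.Quotient.mk_sub]
    have t2 : (Submodule.Quotient.mk (B (B (B y z) x) α) : A ⧸ σ) =
        Submodule.Quotient.mk (B y (B z (B x α))) - Submodule.Quotient.mk (B z (B y (B x α)))
        - (Submodule.Quotient.mk (B x (B y (B z α))) - Submodule.Quotient.mk (B x (B z (B y α)))) := by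
      rw [key (B y z) x α, key y z (B x α)]
      congr 1
      have h2 : (Submodule.Quotient.mk (B x (B (B y z) α)) : A ⧸ σ) =
          Submodule.Quotient.mk (B x (B y (B z α) - B z (B y α))) := by
        apply keyc x hx
        rw [Submodule.Quotient.mk_sub]
        exact key y z α
      rw [h2, map_sub, Submodule.Quotient.mk_sub]
    have t3 : (Submodule.Quotient.mk (B (B (B z x) y) α) : A ⧸ σ) =
        Submodule.Quotient.mk (B z (B x (B y α))) - Submodule.Quotient.mk (B x (B z (B y α)))
        - (Submodule.Quotient.mk (B y (B z (B x α))) - Submodule.Quotient.mk (B y (B x (B z α)))) := by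
      rw [key (B z x) y α, key z x (B y α)]
      congr 1
      have h2 : (Submodule.Quotient.mk (B y (B (B z x) α)) : A ⧸ σ) =
          Submodule.Quotient.mk (B y (B z (B x α) - B x (B z α))) := by
        apply keyc y hy
        rw [Submodule.Quotient.mk_sub]
        exact key z x α
      rw [h2, map_sub, Submodule.Quotient.mk_sub]
    rw [t1, t2, t3]
    abel
  exact Subtype.ext_iff.mp hT
end

section
/- Let C be a vector space with an alternating bilinear bracket, σ ⊆ End(C) a subspace closed under the commutator, t : C × C → σ alternating bilinear with [[α,β],γ] + cyclic = t(α,β)(γ) + t(β,γ)(α) + t(γ,α)(β), and ∇ : C → End_vec(σ) with T([α,β]) − [Tα,β] − [α,Tβ] = ∇_β(T)(α) − ∇_α(T)(β). Define on A = C ⊕ σ the alternating bracket [(α,S),(β,T)] = ([α,β] + S(β) − T(α), −t(α,β) + ∇_α(T) − ∇_β(S) + [S,T]), where [S,T] = S∘T − T∘S. Then the Jacobiator of this bracket takes values in the subspace {0} ⊕ σ ⊆ A; equivalently, the C-component of [[(x),(y)],(z)] + [[(y),(z)],(x)] + [[(z),(x)],(y)] vanishes for all x, y, z ∈ A. -/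
/-- Construction of a Cartan pair from a Cartan algebroid (over a point): on
`A = C ⊕ σ` with bracket
`[(α,S),(β,T)] = ([α,β] + S β − T α, −t(α,β) + ∇_α T − ∇_β S + [S,T])`,
the Jacobiator takes values in `{0} ⊕ σ`, i.e. its `C`-component vanishes. -/
theorem cartan_pair_from_cartan_algebroid {K C : Type*} [Field K]
    [AddCommGroup C] [Module K C]
    (B : C →ₗ[K] C →ₗ[K] C) (halt : ∀ x, B x x = 0)
    (σ : Submodule K (Module.End K C))
    (hcomm : ∀ S T : Module.End K C, S ∈ σ → T ∈ σ → S * T - T * S ∈ σ)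
    (t : C →ₗ[K] C →ₗ[K] σ) (htalt : ∀ x, t x x = 0)
    (ht : ∀ α β γ : C, B (B α β) γ + B (B β γ) α + B (B γ α) β
      = (t α β).1 γ + (t β γ).1 α + (t γ α).1 β)
    (D : C →ₗ[K] σ →ₗ[K] σ)
    (hD : ∀ (α β : C) (T : σ),
      T.1 (B α β) - B (T.1 α) β - B α (T.1 β) = (D β T).1 α - (D α T).1 β)
    (Br : C × σ → C × σ → C × σ)
    (hBr1 : ∀ x y : C × σ, (Br x y).1 = B x.1 y.1 + x.2.1 y.1 - y.2.1 x.1)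
    (hBr2 : ∀ x y : C × σ, ((Br x y).2 : Module.End K C)
      = -(t x.1 y.1).1 + (D x.1 y.2).1 - (D y.1 x.2).1
        + (x.2.1 * y.2.1 - y.2.1 * x.2.1)) :
    ∀ x y z : C × σ, (Br (Br x y) z + Br (Br y z) x + Br (Br z x) y).1 = 0 := by
  have hB : ∀ a b : C, B a b = -B b a := by
    intro a b
    have h := halt (a + b)
    simp only [map_add, LinearMap.add_apply, halt] at h
    have h2 : B a b + B b a = 0 := by
      rw [show (0:C) + B b a + (B a b + 0) = B a b + B b a by abel] at h
      exact h
    exact eq_neg_of_add_eq_zero_left h2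
  intro x y z
  obtain ⟨α, S⟩ := x; obtain ⟨β, T⟩ := y; obtain ⟨γ, U⟩ := z
  have hU := hD α β U
  have hS := hD β γ S
  have hT := hD γ α T
  have hcyc := ht α β γ
  simp only [Prod.fst_add, hBr1]
  simp only [hBr2, map_add, map_sub, map_neg, LinearMap.add_apply, LinearMap.sub_apply,
    LinearMap.neg_apply, Module.End.mul_apply]
  linear_combination (norm := module) hcyc - hU - hS - hT - hB γ (T.1 α) - hB α (U.1 β) - hB β (S.1 γ)
end
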